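/- arXiv:2104.09149 — 2 statements merged into one kernel-verified Lean document; each statement's English description precedes it below -/
import Mathlib

section
/- Suppose in addition that E is convex on P(X) and that e_0 := E(μ0) < ∞. Then the entropy S(e) is increasing on (−∞, e_0], strictly increasing on the subset of (−∞, e_0] where S(e) > −∞, and for every e ≤ e_0 one has S(e) = sup{ S(μ) : μ ∈ P(X), E(μ) ≤ e }. -/
open MeasureTheory Filter Set Topology
open scoped Classical

noncomputable section

/-- The entropy `S(μ)` of `μ` relative to `μ0`: `-∫ log(dμ/dμ0) dμ` if `μ ≪ μ0`
(and `-∞` if this integral equals `+∞`), and `-∞` otherwise. -/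
def Sm {X : Type*} [MeasurableSpace X] (μ0 μ : Measure X) : EReal :=
  if μ ≪ μ0 ∧ Integrable (fun x => Real.log ((μ.rnDeriv μ0 x).toReal)) μ
  then ((-(∫ x, Real.log ((μ.rnDeriv μ0 x).toReal) ∂μ) : ℝ) : EReal)
  else ⊥

/-- The affine combination `(1-t)·μ + t·ν` of two probability measures (for `t ∈ [0,1]`). -/
def pmAffine {X : Type*} [MeasurableSpace X] (μ ν : ProbabilityMeasure X) (t : ℝ) :
    ProbabilityMeasure X :=
  if h : 0 ≤ t ∧ t ≤ 1 then
    ⟨ENNReal.ofReal (1 - t) • (μ : Measure X) + ENNReal.ofReal t • (ν : Measure X), by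
      constructor
      simp only [Measure.coe_add, Measure.coe_smul, Pi.add_apply, Pi.smul_apply,
        smul_eq_mul, measure_univ, mul_one]
      rw [← ENNReal.ofReal_add (by linarith [h.2]) h.1, sub_add_cancel, ENNReal.ofReal_one]⟩
  else μ

/-- The entropy at energy `e`: `S(e) = sup { S(μ) : μ ∈ P(X), E(μ) = e }`
(equal to `-∞` if no such `μ` exists). -/
def Sent {X : Type*} [MeasurableSpace X] (μ0 : ProbabilityMeasure X)
    (E : ProbabilityMeasure X → EReal) (e : ℝ) : EReal :=
  sSup {s : EReal | ∃ μ : ProbabilityMeasure X,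
    E μ = (e : EReal) ∧ s = Sm (μ0 : Measure X) (μ : Measure X)}

/-- `E` is convex on `P(X)`. -/
def EConvex {X : Type*} [MeasurableSpace X] (E : ProbabilityMeasure X → EReal) : Prop :=
  ∀ μ ν : ProbabilityMeasure X, ∀ t : ℝ, 0 ≤ t → t ≤ 1 →
    E (pmAffine μ ν t) ≤ ((1 - t : ℝ) : EReal) * E μ + ((t : ℝ) : EReal) * E ν

/-- `E` has the affine continuity property: for every `μ1 ∈ P(X)` with `E(μ1) < ∞` and
`S(μ1) > -∞`, the function `t ↦ E((1-t)μ0 + tμ1)` is continuous on `[0,1]`. -/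
def AffineCont {X : Type*} [MeasurableSpace X] (μ0 : ProbabilityMeasure X)
    (E : ProbabilityMeasure X → EReal) : Prop :=
  ∀ μ1 : ProbabilityMeasure X, E μ1 ≠ ⊤ → Sm (μ0 : Measure X) (μ1 : Measure X) ≠ ⊥ →
    ContinuousOn (fun t => E (pmAffine μ0 μ1 t)) (Icc (0:ℝ) 1)

/-- `μ0` has the energy approximation property for `E`. -/
def EnergyApprox {X : Type*} [MeasurableSpace X] [TopologicalSpace X] [OpensMeasurableSpace X]
    (μ0 : ProbabilityMeasure X) (E : ProbabilityMeasure X → EReal) : Prop :=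
  ∀ μ : ProbabilityMeasure X, ∃ μs : ℕ → ProbabilityMeasure X,
    (∀ j, (μs j : Measure X) ≪ (μ0 : Measure X)) ∧
    Tendsto μs atTop (nhds μ) ∧
    Tendsto (fun j => E (μs j)) atTop (nhds (E μ))

/-- The free energy functional `F_β(μ) = βE(μ) − S(μ)` (equal to `+∞` when `S(μ) = −∞`). -/
def Fbeta {X : Type*} [MeasurableSpace X] (μ0 : ProbabilityMeasure X)
    (E : ProbabilityMeasure X → EReal) (β : ℝ) (μ : ProbabilityMeasure X) : EReal :=
  if Sm (μ0 : Measure X) (μ : Measure X) = ⊥ then ⊤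
  else (β : EReal) * E μ - Sm (μ0 : Measure X) (μ : Measure X)

/-- The free energy `F(β) = inf_{μ ∈ P(X)} (βE(μ) − S(μ))`. -/
def freeEnergy {X : Type*} [MeasurableSpace X] (μ0 : ProbabilityMeasure X)
    (E : ProbabilityMeasure X → EReal) (β : ℝ) : EReal :=
  ⨅ μ : ProbabilityMeasure X, Fbeta μ0 E β μ

/-- The concave Legendre–Fenchel transform `f*(y) := inf_{x ∈ ℝ} (x·y − f(x))`. -/
def LegT (f : ℝ → EReal) (y : ℝ) : EReal := ⨅ x : ℝ, ((x * y : ℝ) : EReal) - f x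

/-- Concavity of an `EReal`-valued function on a set of reals. -/
def ConcOn (s : Set ℝ) (f : ℝ → EReal) : Prop :=
  ∀ x ∈ s, ∀ y ∈ s, ∀ t : ℝ, 0 ≤ t → t ≤ 1 →
    ((t : ℝ) : EReal) * f x + ((1 - t : ℝ) : EReal) * f y ≤ f (t * x + (1 - t) * y)

/-- Strict concavity of an `EReal`-valued function on a set of reals. -/
def StrictConcOn (s : Set ℝ) (f : ℝ → EReal) : Prop :=
  ∀ x ∈ s, ∀ y ∈ s, x ≠ y → ∀ t : ℝ, 0 < t → t < 1 →
    ((t : ℝ) : EReal) * f x + ((1 - t : ℝ) : EReal) * f y < f (t * x + (1 - t) * y)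

/-!
Write `S(μ) = -KL(μ ‖ μ0)`, so that `S(e) = -K(e)` with `K(e)` the infimum of `KL(μ ‖ μ0)` over
the energy shell `E μ = e`. Given `E μ ≤ e ≤ e0`, lower semicontinuity and convexity of `E` produce
a point `μ_t = (1 - t) μ + t μ0` of the segment from `μ` to `μ0` with `E μ_t = e`, and convexity of
`KL(· ‖ μ0)` gives `KL(μ_t ‖ μ0) ≤ (1 - t) KL(μ ‖ μ0)`. This yields the sublevel formula and the
monotonicity. If moreover `E μ = a < e`, convexity of `E` forces `1 - t ≤ (e0 - e) / (e0 - a)`, so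
`K(e) ≤ (e0 - e) / (e0 - a) · K(a)`, which is strict decrease as soon as `0 < K(a) < ∞`.
Finally `K(a) > 0` for `a < e0`: otherwise measures of energy `a` converge to `μ0` in relative
entropy, hence weakly (by an `L¹` bound on their densities), and lower semicontinuity of `E` at
`μ0` contradicts `E μ0 = e0 > a`.
-/

open InformationTheory
open scoped ENNReal BoundedContinuousFunction

lemma log_mul_sub_le_klFun {x y : ℝ} (hx : 0 ≤ x) (hy : 0 < y) :
    Real.log y * (x - y) ≤ klFun x := by
  have h : klFun x = Real.log y * (x - y) + y * klFun (x / y) + klFun y := by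
    rcases hx.eq_or_lt with rfl | hx
    · simp only [klFun]; ring
    · simp only [klFun, Real.log_div hx.ne' hy.ne']
      field_simp
      ring
  nlinarith [klFun_nonneg (div_nonneg hx hy.le), klFun_nonneg hy.le]

lemma abs_sub_one_le_klFun {ε x : ℝ} (hε : 0 < ε) (hε1 : ε < 1) (hx : 0 ≤ x) :
    |x - 1| ≤ ε + 2 / ε * klFun x := by
  have h2ε : 2 / ε * ε = 2 := by field_simp
  rcases le_or_gt x (1 - ε) with hlo | hlo
  · have hlog : Real.log (1 - ε) ≤ -ε := by
      linarith [Real.log_le_sub_one_of_pos (by linarith : 0 < 1 - ε)]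
    have ht := log_mul_sub_le_klFun hx (by linarith : 0 < 1 - ε)
    have : ε * (1 - ε - x) ≤ klFun x := by nlinarith
    rw [abs_of_nonpos (by linarith)]
    nlinarith [mul_le_mul_of_nonneg_left this (by positivity : 0 ≤ 2 / ε)]
  rcases le_or_gt x (1 + ε) with hhi | hhi
  · have hK : 0 ≤ 2 / ε * klFun x := mul_nonneg (by positivity) (klFun_nonneg hx)
    rw [abs_le]
    constructor <;> linarith
  · have hlog : ε / 2 ≤ Real.log (1 + ε) := by
      have h := Real.one_sub_inv_le_log_of_pos (by linarith : 0 < 1 + ε)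
      rw [show 1 - (1 + ε)⁻¹ = ε / (1 + ε) by field_simp; ring] at h
      calc ε / 2 ≤ ε / (1 + ε) := by gcongr; linarith
        _ ≤ _ := h
    have ht := log_mul_sub_le_klFun hx (by linarith : 0 < 1 + ε)
    have : ε / 2 * (x - 1 - ε) ≤ klFun x := by nlinarith
    rw [abs_of_nonneg (by linarith)]
    nlinarith [mul_le_mul_of_nonneg_left this (by positivity : 0 ≤ 2 / ε)]

section

variable {X : Type*} [MeasurableSpace X]

lemma toReal_rnDeriv_convexCombination (μ ν : Measure X) [IsFiniteMeasure μ] [IsFiniteMeasure ν]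
    {t : ℝ} (ht0 : 0 ≤ t) (ht1 : t ≤ 1) :
    ∀ᵐ x ∂ν, ((ENNReal.ofReal (1 - t) • μ + ENNReal.ofReal t • ν).rnDeriv ν x).toReal =
      (1 - t) * (μ.rnDeriv ν x).toReal + t := by
  have := μ.smul_finite (ENNReal.ofReal_ne_top (r := 1 - t))
  have := ν.smul_finite (ENNReal.ofReal_ne_top (r := t))
  filter_upwards [Measure.rnDeriv_add (ENNReal.ofReal (1 - t) • μ) (ENNReal.ofReal t • ν) ν,
    Measure.rnDeriv_smul_left_of_ne_top μ ν (ENNReal.ofReal_ne_top (r := 1 - t)),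
    Measure.rnDeriv_smul_left_of_ne_top ν ν (ENNReal.ofReal_ne_top (r := t)),
    Measure.rnDeriv_self ν, Measure.rnDeriv_ne_top μ ν] with x hadd hμ hν hself hfin
  simp only [hadd, Pi.add_apply, hμ, hν, Pi.smul_apply, hself, smul_eq_mul, mul_one]
  rw [ENNReal.toReal_add (ENNReal.mul_ne_top ENNReal.ofReal_ne_top hfin) ENNReal.ofReal_ne_top,
    ENNReal.toReal_mul, ENNReal.toReal_ofReal (by linarith), ENNReal.toReal_ofReal ht0]

lemma klDiv_convexCombination_le (μ ν : Measure X) [IsFiniteMeasure μ] [IsFiniteMeasure ν]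
    {t : ℝ} (ht0 : 0 ≤ t) (ht1 : t ≤ 1) :
    klDiv (ENNReal.ofReal (1 - t) • μ + ENNReal.ofReal t • ν) ν ≤
      ENNReal.ofReal (1 - t) * klDiv μ ν := by
  rcases ht1.eq_or_lt with rfl | ht1
  · simp [klDiv_self]
  by_cases hac : μ ≪ ν
  swap
  · rw [klDiv_of_not_ac hac, ENNReal.mul_top (by simpa using ht1)]
    exact le_top
  have := μ.smul_finite (ENNReal.ofReal_ne_top (r := 1 - t))
  have := ν.smul_finite (ENNReal.ofReal_ne_top (r := t))
  have hmix : ENNReal.ofReal (1 - t) • μ + ENNReal.ofReal t • ν ≪ ν :=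
    (hac.smul_left _).add_left (Measure.AbsolutelyContinuous.rfl.smul_left _)
  rw [klDiv_eq_lintegral_klFun_of_ac hmix, klDiv_eq_lintegral_klFun_of_ac hac,
    ← lintegral_const_mul' _ _ ENNReal.ofReal_ne_top]
  refine lintegral_mono_ae ?_
  filter_upwards [toReal_rnDeriv_convexCombination μ ν ht0 ht1.le] with x hx
  rw [hx, ← ENNReal.ofReal_mul (by linarith)]
  gcongr
  simpa [klFun_one] using convexOn_klFun.2 (mem_Ici.2 (ENNReal.toReal_nonneg (a := μ.rnDeriv ν x)))
    (mem_Ici.2 zero_le_one) (by linarith : 0 ≤ 1 - t) ht0 (by ring)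

lemma integral_abs_rnDeriv_sub_one_le (μ ν : Measure X) [IsFiniteMeasure μ]
    [IsProbabilityMeasure ν] (hμν : klDiv μ ν ≠ ∞) {ε : ℝ} (hε : 0 < ε) (hε1 : ε < 1) :
    ∫ x, |(μ.rnDeriv ν x).toReal - 1| ∂ν ≤ ε + 2 / ε * (klDiv μ ν).toReal := by
  obtain ⟨hac, hint⟩ := klDiv_ne_top_iff.1 hμν
  have hkl := (integrable_klFun_rnDeriv_iff hac).2 hint
  calc ∫ x, |(μ.rnDeriv ν x).toReal - 1| ∂ν
      ≤ ∫ x, (ε + 2 / ε * klFun (μ.rnDeriv ν x).toReal) ∂ν :=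
        integral_mono (Measure.integrable_toReal_rnDeriv.sub (integrable_const 1)).abs
          ((integrable_const ε).add (hkl.const_mul _))
          fun x => abs_sub_one_le_klFun hε hε1 ENNReal.toReal_nonneg
    _ = ε + 2 / ε * (klDiv μ ν).toReal := by
        rw [integral_add (integrable_const ε) (hkl.const_mul _), integral_const, integral_const_mul,
          toReal_klDiv_eq_integral_klFun hac]
        simp

lemma Sm_eq_neg_klDiv (μ0 μ : Measure X) [IsProbabilityMeasure μ0] [IsProbabilityMeasure μ] :
    Sm μ0 μ = -(klDiv μ μ0 : EReal) := by
  unfold Sm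
  split_ifs with h
  · have hnonneg := integral_llr_add_sub_measure_univ_nonneg h.1 h.2
    simp only [probReal_univ, add_sub_cancel_right] at hnonneg
    rw [klDiv_of_ac_of_integrable h.1 h.2, EReal.coe_ennreal_ofReal]
    simpa [llr_def] using hnonneg
  · rw [klDiv_eq_top_iff.2 fun hac hint => h ⟨hac, hint⟩]
    rfl

lemma sSup_Sm_eq_neg_iInf_klDiv (μ0 : ProbabilityMeasure X) (P : ProbabilityMeasure X → Prop) :
    sSup {s : EReal | ∃ μ : ProbabilityMeasure X, P μ ∧ s = Sm (μ0 : Measure X) (μ : Measure X)} =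
      -((⨅ (μ : ProbabilityMeasure X) (_ : P μ), klDiv (μ : Measure X) μ0 : ℝ≥0∞) : EReal) := by
  refine le_antisymm (sSup_le ?_) ?_
  · rintro _ ⟨μ, hμ, rfl⟩
    rw [Sm_eq_neg_klDiv, EReal.neg_le_neg_iff, EReal.coe_ennreal_le_coe_ennreal_iff]
    exact iInf₂_le μ hμ
  · have hsup : sSup {s : EReal | ∃ μ : ProbabilityMeasure X, P μ ∧
        s = Sm (μ0 : Measure X) (μ : Measure X)} ≤ 0 :=
      sSup_le fun _ ⟨μ, _, hs⟩ => by
        rw [hs, Sm_eq_neg_klDiv, EReal.neg_le, neg_zero]; exact EReal.coe_ennreal_nonneg _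
    rw [EReal.neg_le, ← EReal.coe_toENNReal (EReal.neg_nonneg.2 hsup),
      EReal.coe_ennreal_le_coe_ennreal_iff]
    refine le_iInf₂ fun μ hμ => ?_
    rw [← EReal.coe_ennreal_le_coe_ennreal_iff, EReal.coe_toENNReal (EReal.neg_nonneg.2 hsup),
      EReal.neg_le, ← Sm_eq_neg_klDiv]
    exact le_sSup ⟨μ, hμ, rfl⟩

def infKLDivAt (μ0 : ProbabilityMeasure X) (E : ProbabilityMeasure X → EReal) (e : ℝ) : ℝ≥0∞ :=
  ⨅ (μ : ProbabilityMeasure X) (_ : E μ = e), klDiv (μ : Measure X) μ0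

lemma Sent_eq_neg_infKLDivAt (μ0 : ProbabilityMeasure X) (E : ProbabilityMeasure X → EReal)
    (e : ℝ) : Sent μ0 E e = -(infKLDivAt μ0 E e : EReal) :=
  sSup_Sm_eq_neg_iInf_klDiv μ0 _

lemma pmAffine_coe (μ ν : ProbabilityMeasure X) {t : ℝ} (ht0 : 0 ≤ t) (ht1 : t ≤ 1) :
    (pmAffine μ ν t : Measure X) =
      ENNReal.ofReal (1 - t) • (μ : Measure X) + ENNReal.ofReal t • (ν : Measure X) := by
  rw [pmAffine]
  erw [dif_pos ⟨ht0, ht1⟩]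
  rfl

lemma pmAffine_zero (μ ν : ProbabilityMeasure X) : pmAffine μ ν 0 = μ := by
  apply ProbabilityMeasure.toMeasure_injective
  simp [pmAffine_coe μ ν le_rfl zero_le_one]

lemma pmAffine_one (μ ν : ProbabilityMeasure X) : pmAffine μ ν 1 = ν := by
  apply ProbabilityMeasure.toMeasure_injective
  simp [pmAffine_coe μ ν zero_le_one le_rfl]

lemma pmAffine_pmAffine (μ ν : ProbabilityMeasure X) {a r : ℝ} (ha0 : 0 ≤ a) (ha1 : a ≤ 1)
    (hr0 : 0 ≤ r) (hr1 : r ≤ 1) :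
    pmAffine (pmAffine μ ν a) ν r = pmAffine μ ν (a + r * (1 - a)) := by
  apply ProbabilityMeasure.toMeasure_injective
  rw [pmAffine_coe _ ν hr0 hr1, pmAffine_coe μ ν ha0 ha1,
    pmAffine_coe μ ν (by nlinarith) (by nlinarith), smul_add, smul_smul, smul_smul,
    ← ENNReal.ofReal_mul (by linarith), ← ENNReal.ofReal_mul (by linarith), add_assoc, ← add_smul,
    ← ENNReal.ofReal_add (by nlinarith) hr0]
  rw [show (1 - r) * (1 - a) = 1 - (a + r * (1 - a)) by ring,
    show (1 - r) * a + r = a + r * (1 - a) by ring]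

lemma EConvex.le_pmAffine {E : ProbabilityMeasure X → EReal} (hE : EConvex E)
    {μ ν : ProbabilityMeasure X} {a b t : ℝ} (ha : E μ = a) (hb : E ν = b) (ht0 : 0 ≤ t)
    (ht1 : t ≤ 1) : E (pmAffine μ ν t) ≤ ((1 - t) * a + t * b : ℝ) := by
  simpa only [ha, hb, EReal.coe_add, EReal.coe_mul] using hE μ ν t ht0 ht1

lemma exists_energy_pmAffine_le_of_lt {E : ProbabilityMeasure X → EReal} (hEbot : ∀ μ, E μ ≠ ⊥)
    (hEconv : EConvex E) {μ ν : ProbabilityMeasure X} {c e e0 : ℝ} (he0 : E ν = e0)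
    (hc0 : 0 ≤ c) (hc1 : c ≤ 1) (hlt : E (pmAffine μ ν c) < e) (he : e ≤ e0) :
    ∃ u ∈ Ioc c 1, E (pmAffine μ ν u) ≤ e := by
  set a := (E (pmAffine μ ν c)).toReal
  have hEa : E (pmAffine μ ν c) = a :=
    (EReal.coe_toReal (hlt.trans (EReal.coe_lt_top e)).ne (hEbot _)).symm
  have hae : a < e := EReal.coe_lt_coe_iff.1 (hEa ▸ hlt)
  have hc1 : c < 1 := hc1.lt_of_ne fun h => by
    rw [h, pmAffine_one, he0] at hlt
    exact (EReal.coe_lt_coe_iff.1 hlt).not_ge he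
  -- by convexity `E` is at most `a + r * (e0 - a) ≤ e` at `c + r * (1 - c)`; the `+ 1` keeps the
  -- denominator of `r` positive when `a = e0`
  set r := (e - a) / (e0 - a + 1)
  have hr0 : 0 < r := div_pos (by linarith) (by linarith)
  have hr1 : r ≤ 1 := (div_le_one (by linarith)).2 (by linarith)
  have hr : r * (e0 - a + 1) = e - a := div_mul_cancel₀ _ (by linarith)
  refine ⟨c + r * (1 - c), ⟨by nlinarith, by nlinarith⟩, ?_⟩
  rw [← pmAffine_pmAffine μ ν hc0 hc1.le hr0.le hr1]
  exact (hEconv.le_pmAffine hEa he0 hr0.le hr1).trans (EReal.coe_le_coe_iff.2 (by nlinarith))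

lemma klDiv_pmAffine_le (μ ν : ProbabilityMeasure X) {t : ℝ} (ht0 : 0 ≤ t) (ht1 : t ≤ 1) :
    klDiv (pmAffine μ ν t : Measure X) ν ≤ ENNReal.ofReal (1 - t) * klDiv (μ : Measure X) ν := by
  rw [pmAffine_coe μ ν ht0 ht1]
  exact klDiv_convexCombination_le _ _ ht0 ht1

section Topology

variable [TopologicalSpace X] [OpensMeasurableSpace X]

lemma abs_integral_sub_integral_le (μ ν : Measure X) [IsFiniteMeasure μ] [IsFiniteMeasure ν]
    (hμν : μ ≪ ν) (f : X →ᵇ ℝ) :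
    |∫ x, f x ∂μ - ∫ x, f x ∂ν| ≤ ‖f‖ * ∫ x, |(μ.rnDeriv ν x).toReal - 1| ∂ν := by
  have hfμ : Integrable (fun x => (μ.rnDeriv ν x).toReal • f x) ν :=
    (integrable_rnDeriv_smul_iff hμν).2 (f.integrable μ)
  rw [← integral_rnDeriv_smul hμν, ← integral_sub hfμ (f.integrable ν), ← integral_const_mul]
  refine (abs_integral_le_integral_abs).trans (integral_mono_of_nonneg
    (ae_of_all _ fun _ => abs_nonneg _)
    ((Measure.integrable_toReal_rnDeriv.sub (integrable_const 1)).abs.const_mul _)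
    (ae_of_all _ fun x => ?_))
  dsimp only
  rw [smul_eq_mul, ← sub_one_mul, abs_mul, mul_comm]
  exact mul_le_mul_of_nonneg_right ((Real.norm_eq_abs _).symm ▸ f.norm_coe_le_norm x) (abs_nonneg _)

lemma tendsto_of_tendsto_klDiv_zero {ι : Type*} {l : Filter ι} {μs : ι → ProbabilityMeasure X}
    {ν : ProbabilityMeasure X} (h : Tendsto (fun i => klDiv (μs i : Measure X) ν) l (𝓝 0)) :
    Tendsto μs l (𝓝 ν) := by
  rw [ProbabilityMeasure.tendsto_iff_forall_integral_tendsto]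
  intro f
  rw [Metric.tendsto_nhds]
  intro δ hδ
  set ε := min (1 / 2) (δ / (2 * (‖f‖ + 1)))
  have hε : 0 < ε := lt_min one_half_pos (by positivity)
  have hε1 : ε < 1 := (min_le_left _ _).trans_lt one_half_lt_one
  have hfε : ‖f‖ * ε < δ := by
    calc ‖f‖ * ε ≤ (‖f‖ + 1) * (δ / (2 * (‖f‖ + 1))) := by
          gcongr; · linarith
          exact min_le_right _ _
      _ = δ / 2 := by field_simp
      _ < δ := half_lt_self hδ
  have hbound : Tendsto (fun i => ‖f‖ * (ε + 2 / ε * (klDiv (μs i : Measure X) ν).toReal)) l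
      (𝓝 (‖f‖ * ε)) := by
    simpa using ((ENNReal.tendsto_toReal ENNReal.zero_ne_top).comp h).const_mul (2 / ε)
      |>.const_add ε |>.const_mul ‖f‖
  filter_upwards [hbound.eventually (gt_mem_nhds hfε),
    h.eventually (gt_mem_nhds ENNReal.zero_lt_top)] with i hi hfin
  rw [Real.dist_eq]
  calc _ ≤ ‖f‖ * ∫ x, |((μs i : Measure X).rnDeriv ν x).toReal - 1| ∂(ν : Measure X) :=
        abs_integral_sub_integral_le _ _ (klDiv_ne_top_iff.1 hfin.ne).1 f
    _ ≤ ‖f‖ * (ε + 2 / ε * (klDiv (μs i : Measure X) ν).toReal) := by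
        gcongr
        exact integral_abs_rnDeriv_sub_one_le _ _ hfin.ne hε hε1
    _ < δ := hi

lemma mem_closure_of_iInf_klDiv_eq_zero {s : Set (ProbabilityMeasure X)} {ν : ProbabilityMeasure X}
    (h : ⨅ μ ∈ s, klDiv (μ : Measure X) ν = 0) : ν ∈ closure s := by
  have hs : s.Nonempty := by
    by_contra hs
    simp [Set.not_nonempty_iff_eq_empty.1 hs] at h
  rw [← sInf_image] at h
  obtain ⟨u, -, hu, hus⟩ := exists_seq_tendsto_sInf (hs.image _) (OrderBot.bddBelow (α := ℝ≥0∞) _)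
  choose μs hμs hu_eq using hus
  rw [h] at hu
  refine mem_closure_of_tendsto (tendsto_of_tendsto_klDiv_zero (l := atTop) ?_)
    (Eventually.of_forall hμs)
  simpa [hu_eq] using hu

lemma continuousOn_pmAffine (μ ν : ProbabilityMeasure X) :
    ContinuousOn (pmAffine μ ν) (Icc 0 1) := by
  intro t ht
  rw [ContinuousWithinAt, ProbabilityMeasure.tendsto_iff_forall_integral_tendsto]
  intro f
  have hint : ∀ s ∈ Icc (0 : ℝ) 1, ∫ x, f x ∂(pmAffine μ ν s : Measure X) =
      (1 - s) * ∫ x, f x ∂(μ : Measure X) + s * ∫ x, f x ∂(ν : Measure X) := fun s hs => by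
    rw [pmAffine_coe μ ν hs.1 hs.2, integral_add_measure
      ((f.integrable _).smul_measure ENNReal.ofReal_ne_top)
      ((f.integrable _).smul_measure ENNReal.ofReal_ne_top), integral_smul_measure,
      integral_smul_measure, ENNReal.toReal_ofReal (by linarith [hs.2]),
      ENNReal.toReal_ofReal hs.1, smul_eq_mul, smul_eq_mul]
  refine ((Continuous.continuousWithinAt ?_).congr (fun s hs => hint s hs) (hint t ht) :
    ContinuousWithinAt _ (Icc 0 1) t)
  fun_prop

lemma exists_energy_pmAffine_eq {E : ProbabilityMeasure X → EReal} (hEbot : ∀ μ, E μ ≠ ⊥)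
    (hElsc : LowerSemicontinuous E) (hEconv : EConvex E) {μ ν : ProbabilityMeasure X}
    {e e0 : ℝ} (he0 : E ν = e0) (hμ : E μ ≤ e) (he : e ≤ e0) :
    ∃ t ∈ Icc (0 : ℝ) 1, E (pmAffine μ ν t) = e := by
  set S := Icc (0 : ℝ) 1 ∩ pmAffine μ ν ⁻¹' (E ⁻¹' Iic (e : EReal))
  have hS : IsClosed S :=
    (continuousOn_pmAffine μ ν).preimage_isClosed_of_isClosed isClosed_Icc
      (hElsc.isClosed_preimage _)
  have h0 : (0 : ℝ) ∈ S := by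
    refine ⟨left_mem_Icc.2 zero_le_one, ?_⟩
    simpa [pmAffine_zero] using hμ
  have hbdd : BddAbove S := ⟨1, fun t ht => ht.1.2⟩
  have hc : sSup S ∈ S := hS.csSup_mem ⟨0, h0⟩ hbdd
  refine ⟨sSup S, hc.1, (hc.2 : _ ≤ _).antisymm (not_lt.1 fun hlt => ?_)⟩
  obtain ⟨u, hu, hEu⟩ := exists_energy_pmAffine_le_of_lt hEbot hEconv he0 hc.1.1 hc.1.2 hlt he
  exact hu.1.not_ge (le_csSup hbdd ⟨⟨hc.1.1.trans hu.1.le, hu.2⟩, hEu⟩)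

section InfKLDivAt

variable {μ0 : ProbabilityMeasure X} {E : ProbabilityMeasure X → EReal} {e0 : ℝ}

lemma infKLDivAt_le_klDiv (hEbot : ∀ μ, E μ ≠ ⊥) (hElsc : LowerSemicontinuous E)
    (hEconv : EConvex E) (he0 : E μ0 = e0) {μ : ProbabilityMeasure X} {e : ℝ} (hμ : E μ ≤ e)
    (he : e ≤ e0) : infKLDivAt μ0 E e ≤ klDiv (μ : Measure X) μ0 := by
  obtain ⟨t, ht, hEt⟩ := exists_energy_pmAffine_eq hEbot hElsc hEconv he0 hμ he
  calc infKLDivAt μ0 E e ≤ klDiv (pmAffine μ μ0 t : Measure X) μ0 := iInf₂_le (pmAffine μ μ0 t) hEt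
    _ ≤ ENNReal.ofReal (1 - t) * klDiv (μ : Measure X) μ0 := klDiv_pmAffine_le μ μ0 ht.1 ht.2
    _ ≤ klDiv (μ : Measure X) μ0 :=
        mul_le_of_le_one_left' (ENNReal.ofReal_le_one.2 (by linarith [ht.1]))

lemma infKLDivAt_antitoneOn (hEbot : ∀ μ, E μ ≠ ⊥) (hElsc : LowerSemicontinuous E)
    (hEconv : EConvex E) (he0 : E μ0 = e0) : AntitoneOn (infKLDivAt μ0 E) (Iic e0) :=
  fun _ _ _ hb hab => le_iInf₂ fun _ hμ =>
    infKLDivAt_le_klDiv hEbot hElsc hEconv he0 (hμ.trans_le (EReal.coe_le_coe_iff.2 hab)) hb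

lemma infKLDivAt_eq_iInf_energy_le (hEbot : ∀ μ, E μ ≠ ⊥) (hElsc : LowerSemicontinuous E)
    (hEconv : EConvex E) (he0 : E μ0 = e0) {e : ℝ} (he : e ≤ e0) :
    infKLDivAt μ0 E e = ⨅ (μ : ProbabilityMeasure X) (_ : E μ ≤ e), klDiv (μ : Measure X) μ0 :=
  le_antisymm (le_iInf₂ fun _ hμ => infKLDivAt_le_klDiv hEbot hElsc hEconv he0 hμ he)
    (iInf₂_mono' fun μ hμ => ⟨μ, hμ.le, le_rfl⟩)

lemma infKLDivAt_pos (hElsc : LowerSemicontinuous E) (he0 : E μ0 = e0) {e : ℝ} (he : e < e0) :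
    0 < infKLDivAt μ0 E e := by
  refine pos_iff_ne_zero.2 fun h => ?_
  have hcl : μ0 ∈ closure {μ | E μ = e} := mem_closure_of_iInf_klDiv_eq_zero h
  obtain ⟨μ, hμ, hEμ⟩ := mem_closure_iff.1 hcl _ (hElsc.isOpen_preimage e)
    (by simpa [he0] using he)
  exact (ne_of_gt hμ) hEμ

lemma infKLDivAt_le_mul (hEbot : ∀ μ, E μ ≠ ⊥) (hElsc : LowerSemicontinuous E)
    (hEconv : EConvex E) (he0 : E μ0 = e0) {a b : ℝ} (hab : a < b) (hb : b ≤ e0) :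
    infKLDivAt μ0 E b ≤ ENNReal.ofReal ((e0 - b) / (e0 - a)) * infKLDivAt μ0 E a := by
  rcases hb.eq_or_lt with rfl | hb
  · exact (iInf₂_le μ0 he0).trans (by simp [klDiv_self])
  have hc : ENNReal.ofReal ((e0 - b) / (e0 - a)) ≠ 0 :=
    (ENNReal.ofReal_pos.2 (div_pos (by linarith) (by linarith))).ne'
  simp only [infKLDivAt, ENNReal.mul_iInf_of_ne hc ENNReal.ofReal_ne_top]
  refine le_iInf₂ fun μ hμ => ?_
  obtain ⟨t, ht, hEt⟩ := exists_energy_pmAffine_eq hEbot hElsc hEconv he0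
    (hμ.trans_le (EReal.coe_le_coe_iff.2 hab.le)) hb.le
  have hbt : b ≤ (1 - t) * a + t * e0 :=
    EReal.coe_le_coe_iff.1 (hEt ▸ hEconv.le_pmAffine hμ he0 ht.1 ht.2)
  have h1t : 1 - t ≤ (e0 - b) / (e0 - a) := by rw [le_div_iff₀ (by linarith)]; nlinarith
  calc _ ≤ klDiv (pmAffine μ μ0 t : Measure X) μ0 := iInf₂_le (pmAffine μ μ0 t) hEt
    _ ≤ ENNReal.ofReal (1 - t) * klDiv (μ : Measure X) μ0 := klDiv_pmAffine_le μ μ0 ht.1 ht.2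
    _ ≤ _ := by gcongr

lemma infKLDivAt_strictAntiOn (hEbot : ∀ μ, E μ ≠ ⊥) (hElsc : LowerSemicontinuous E)
    (hEconv : EConvex E) (he0 : E μ0 = e0) :
    StrictAntiOn (infKLDivAt μ0 E) {e | e ≤ e0 ∧ infKLDivAt μ0 E e < ⊤} := by
  rintro a ⟨-, hatop⟩ b ⟨hb, -⟩ hab
  have hapos := infKLDivAt_pos hElsc he0 (hab.trans_le hb)
  calc infKLDivAt μ0 E b
      ≤ ENNReal.ofReal ((e0 - b) / (e0 - a)) * infKLDivAt μ0 E a :=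
        infKLDivAt_le_mul hEbot hElsc hEconv he0 hab hb
    _ < 1 * infKLDivAt μ0 E a := by
        rw [mul_comm, mul_comm 1]
        refine ENNReal.mul_lt_mul_right hapos.ne' hatop.ne (ENNReal.ofReal_lt_one.2 ?_)
        rw [div_lt_one (by linarith)]
        linarith
    _ = infKLDivAt μ0 E a := one_mul _

end InfKLDivAt

end Topology

end

theorem statement0_general
    {X : Type*} [TopologicalSpace X]
    [MeasurableSpace X] [BorelSpace X]
    (μ0 : ProbabilityMeasure X) (E : ProbabilityMeasure X → EReal)
    (hEbot : ∀ μ, E μ ≠ ⊥)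
    (hElsc : LowerSemicontinuous E)
    (hEconv : EConvex E)
    (e0 : ℝ) (he0 : E μ0 = (e0 : EReal)) :
    MonotoneOn (Sent μ0 E) (Iic e0) ∧
    StrictMonoOn (Sent μ0 E) {e : ℝ | e ≤ e0 ∧ ⊥ < Sent μ0 E e} ∧
    ∀ e : ℝ, e ≤ e0 →
      Sent μ0 E e = sSup {s : EReal | ∃ μ : ProbabilityMeasure X,
        E μ ≤ (e : EReal) ∧ s = Sm (μ0 : Measure X) (μ : Measure X)} := by
  have hS := Sent_eq_neg_infKLDivAt μ0 E
  have hfinite : ∀ e, ⊥ < Sent μ0 E e ↔ infKLDivAt μ0 E e < ⊤ := fun e => by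
    rw [hS, ← EReal.neg_top, EReal.neg_lt_neg_iff, ← EReal.coe_ennreal_top,
      EReal.coe_ennreal_lt_coe_ennreal_iff]
  refine ⟨fun a ha b hb hab => ?_, fun a ha b hb hab => ?_, fun e he => ?_⟩
  · rw [hS, hS, EReal.neg_le_neg_iff, EReal.coe_ennreal_le_coe_ennreal_iff]
    exact infKLDivAt_antitoneOn hEbot hElsc hEconv he0 ha hb hab
  · rw [hS, hS, EReal.neg_lt_neg_iff, EReal.coe_ennreal_lt_coe_ennreal_iff]
    exact infKLDivAt_strictAntiOn hEbot hElsc hEconv he0 ⟨ha.1, (hfinite a).1 ha.2⟩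
      ⟨hb.1, (hfinite b).1 hb.2⟩ hab
  · rw [hS, infKLDivAt_eq_iInf_energy_le hEbot hElsc hEconv he0 he, sSup_Sm_eq_neg_iInf_klDiv]

/-- If `E` is convex on `P(X)` and `e₀ := E(μ0) < ∞`, then the entropy
`S(e)` is increasing on `(-∞, e₀]`, strictly increasing on the subset of `(-∞, e₀]` where
`S(e) > -∞`, and for every `e ≤ e₀` one has `S(e) = sup { S(μ) : μ ∈ P(X), E(μ) ≤ e }`. -/
theorem statement0
    {X : Type*} [TopologicalSpace X] [CompactSpace X] [T2Space X]
    [MeasurableSpace X] [BorelSpace X]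
    (μ0 : ProbabilityMeasure X) (E : ProbabilityMeasure X → EReal)
    (hEbot : ∀ μ, E μ ≠ ⊥)
    (hElsc : LowerSemicontinuous E)
    (hEconv : EConvex E)
    (e0 : ℝ) (he0 : E μ0 = (e0 : EReal)) :
    MonotoneOn (Sent μ0 E) (Iic e0) ∧
    StrictMonoOn (Sent μ0 E) {e : ℝ | e ≤ e0 ∧ ⊥ < Sent μ0 E e} ∧
    ∀ e : ℝ, e ≤ e0 →
      Sent μ0 E e = sSup {s : EReal | ∃ μ : ProbabilityMeasure X,
        E μ ≤ (e : EReal) ∧ s = Sm (μ0 : Measure X) (μ : Measure X)} :=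
  statement0_general μ0 E hEbot hElsc hEconv e0 he0
end
end

section
/- Let Φ : (−∞, 0) → ℝ be a convex function which is bounded as t → 0⁻ (i.e. bounded on [−1, 0)). Then ∫_{−∞}^0 e^{−Φ(t)} dt < ∞ if and only if lim_{t → −∞} Φ'(t) < 0, where Φ' denotes either the left or the right derivative (the limit exists in [−∞, ∞) by convexity). -/
/-!
The one-sided derivatives of a convex `Φ` are monotone, so their limits at `-∞` exist in
`[-∞, ∞)` and are negative iff the derivative is negative somewhere. If `Φ'₋(s) < 0`, the
tangent line at `s` lies below `Φ` and has negative slope, so `e^{-Φ}` is dominated by an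
integrable exponential on `(-∞, 0)`. If `Φ'₊ ≥ 0` everywhere, `Φ` is nondecreasing, so `e^{-Φ}`
is bounded below by a positive constant on `(-∞, -1)` and the integral diverges. Since
`Φ'₋ ≤ Φ'₊`, this closes the cycle of implications for both derivatives.
-/

open MeasureTheory Filter Set Topology
open scoped ENNReal

theorem derivWithin_Iio_eq_Iic {E : Type*} [NormedAddCommGroup E] [NormedSpace ℝ E] (f : ℝ → E)
    (x : ℝ) : derivWithin f (Iio x) x = derivWithin f (Iic x) x := by
  refine derivWithin_congr_set' x ?_
  filter_upwards [self_mem_nhdsWithin] with y (hy : y ≠ x)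
  exact propext ⟨le_of_lt, fun h => lt_of_le_of_ne h hy⟩

theorem MonotoneOn.tendsto_atBot_iInf_Iio {α β : Type*} [Preorder α] [IsCodirectedOrder α]
    [NoMinOrder α] [CompleteLattice β] [TopologicalSpace β] [InfConvergenceClass β]
    {F : α → β} {a : α} (hF : MonotoneOn F (Iio a)) :
    Tendsto F atBot (𝓝 (⨅ t : Iio a, F t)) :=
  tendsto_comp_val_Iio_atBot.1 (tendsto_atBot_iInf fun s t hst => hF s.2 t.2 hst)

theorem MonotoneOn.exists_lt_tendsto_atBot_iff {α β : Type*} [LinearOrder α] [NoMinOrder α]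
    [CompleteLinearOrder β] [TopologicalSpace β] [OrderTopology β]
    {F : α → β} {a : α} (hF : MonotoneOn F (Iio a)) (r : β) :
    (∃ L, L < r ∧ Tendsto F atBot (𝓝 L)) ↔ ∃ s < a, F s < r := by
  have : Nonempty α := ⟨a⟩
  constructor
  · rintro ⟨L, hLr, hL⟩
    exact ((eventually_lt_atBot a).and (hL.eventually (eventually_lt_nhds hLr))).exists
  · rintro ⟨s, hs, hFs⟩
    exact ⟨_, (iInf_le (fun t : Iio a => F t) ⟨s, hs⟩).trans_lt hFs, hF.tendsto_atBot_iInf_Iio⟩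

theorem lintegral_exp_neg_Iio_lt_top_of_affine_le {Φ : ℝ → ℝ} {a b c : ℝ} (hc : c < 0)
    (h : ∀ t < a, b + c * t ≤ Φ t) :
    ∫⁻ t in Iio a, ENNReal.ofReal (Real.exp (-Φ t)) < ⊤ := by
  have hint : IntegrableOn (fun t => Real.exp (-b) * Real.exp (-c * t)) (Iio a) :=
    ((integrableOn_exp_mul_Iic (neg_pos.2 hc) a).mono_set Iio_subset_Iic_self).const_mul _
  refine lt_of_le_of_lt (setLIntegral_mono' measurableSet_Iio fun t ht => ?_)
    hint.setLIntegral_lt_top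
  rw [← Real.exp_add]
  exact ENNReal.ofReal_le_ofReal (Real.exp_le_exp.2 (by linarith [h t ht]))

theorem lintegral_exp_neg_Iio_eq_top_of_le {Φ : ℝ → ℝ} {a C : ℝ} (h : ∀ t < a, Φ t ≤ C) :
    ∫⁻ t in Iio a, ENNReal.ofReal (Real.exp (-Φ t)) = ⊤ := by
  refine top_le_iff.1 ?_
  calc (⊤ : ℝ≥0∞) = ∫⁻ _ in Iio a, ENNReal.ofReal (Real.exp (-C)) := by
        rw [setLIntegral_const, Real.volume_Iio, ENNReal.mul_top (by positivity)]
    _ ≤ ∫⁻ t in Iio a, ENNReal.ofReal (Real.exp (-Φ t)) :=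
        setLIntegral_mono' measurableSet_Iio fun t ht =>
          ENNReal.ofReal_le_ofReal (Real.exp_le_exp.2 (neg_le_neg (h t ht)))

namespace ConvexOn

variable {S : Set ℝ} {f : ℝ → ℝ} {a s x y : ℝ}

theorem add_leftDeriv_mul_sub_le (hf : ConvexOn ℝ S f) (hx : x ∈ interior S) (hy : y ∈ S) :
    f x + derivWithin f (Iio x) x * (y - x) ≤ f y := by
  rcases lt_trichotomy y x with hyx | rfl | hxy
  · have h := hf.slope_le_leftDeriv_of_mem_interior hy hx hyx
    rw [slope_def_field, div_le_iff₀ (sub_pos.2 hyx)] at h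
    linarith
  · simp
  · have h := (hf.leftDeriv_le_rightDeriv_of_mem_interior hx).trans
      (hf.rightDeriv_le_slope_of_mem_interior hx hy hxy)
    rw [slope_def_field, le_div_iff₀ (sub_pos.2 hxy)] at h
    linarith

theorem monotoneOn_of_rightDeriv_nonneg (hf : ConvexOn ℝ S f)
    (h : ∀ x ∈ interior S, 0 ≤ derivWithin f (Ioi x) x) : MonotoneOn f (interior S) := by
  intro x hx y hy hxy
  rcases hxy.eq_or_lt with rfl | hxy
  · rfl
  have hslope := (h x hx).trans (hf.rightDeriv_le_slope_of_mem_interior hx (interior_subset hy) hxy)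
  rw [slope_def_field, le_div_iff₀ (sub_pos.2 hxy), zero_mul, sub_nonneg] at hslope
  exact hslope

theorem lintegral_exp_neg_Iio_lt_top_of_leftDeriv_neg (hf : ConvexOn ℝ (Iio a) f) (hs : s < a)
    (hneg : derivWithin f (Iio s) s < 0) :
    ∫⁻ t in Iio a, ENNReal.ofReal (Real.exp (-f t)) < ⊤ := by
  refine lintegral_exp_neg_Iio_lt_top_of_affine_le
    (b := f s - derivWithin f (Iio s) s * s) hneg fun t ht => ?_
  have := hf.add_leftDeriv_mul_sub_le (x := s) (by rwa [interior_Iio]) ht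
  linarith

theorem exists_rightDeriv_neg_of_lintegral_exp_neg_Iio_lt_top (hf : ConvexOn ℝ (Iio a) f)
    (hfin : ∫⁻ t in Iio a, ENNReal.ofReal (Real.exp (-f t)) < ⊤) :
    ∃ s < a, derivWithin f (Ioi s) s < 0 := by
  by_contra! hnonneg
  have hmono : MonotoneOn f (Iio a) := by
    simpa only [interior_Iio] using
      hf.monotoneOn_of_rightDeriv_nonneg fun x hx => hnonneg x (by rwa [interior_Iio] at hx)
  have hle : ∀ t < a - 1, f t ≤ f (a - 1) := fun t ht =>
    hmono (ht.trans (sub_one_lt a)) (sub_one_lt a) ht.le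
  refine hfin.ne (top_le_iff.1 ?_)
  calc (⊤ : ℝ≥0∞) = ∫⁻ t in Iio (a - 1), ENNReal.ofReal (Real.exp (-f t)) :=
        (lintegral_exp_neg_Iio_eq_top_of_le hle).symm
    _ ≤ _ := lintegral_mono_set (Iio_subset_Iio (sub_one_lt a).le)

theorem lintegral_exp_neg_Iio_lt_top_iff_exists_rightDeriv_neg (hf : ConvexOn ℝ (Iio a) f) :
    ∫⁻ t in Iio a, ENNReal.ofReal (Real.exp (-f t)) < ⊤ ↔
      ∃ s < a, derivWithin f (Ioi s) s < 0 :=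
  ⟨hf.exists_rightDeriv_neg_of_lintegral_exp_neg_Iio_lt_top, fun ⟨s, hs, hneg⟩ =>
    hf.lintegral_exp_neg_Iio_lt_top_of_leftDeriv_neg hs
      ((hf.leftDeriv_le_rightDeriv_of_mem_interior (by rwa [interior_Iio])).trans_lt hneg)⟩

theorem lintegral_exp_neg_Iio_lt_top_iff_exists_leftDeriv_neg (hf : ConvexOn ℝ (Iio a) f) :
    ∫⁻ t in Iio a, ENNReal.ofReal (Real.exp (-f t)) < ⊤ ↔
      ∃ s < a, derivWithin f (Iio s) s < 0 := by
  refine ⟨fun hfin => ?_, fun ⟨s, hs, hneg⟩ =>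
    hf.lintegral_exp_neg_Iio_lt_top_of_leftDeriv_neg hs hneg⟩
  obtain ⟨s, hs, hneg⟩ := hf.exists_rightDeriv_neg_of_lintegral_exp_neg_Iio_lt_top hfin
  exact ⟨s, hs, (hf.leftDeriv_le_rightDeriv_of_mem_interior (by rwa [interior_Iio])).trans_lt hneg⟩

end ConvexOn

theorem statement15_general (Φ : ℝ → ℝ)
    (hconv : ConvexOn ℝ (Iio (0:ℝ)) Φ) :
    ((∫⁻ t in Iio (0:ℝ), ENNReal.ofReal (Real.exp (-Φ t))) < ⊤ ↔
      ∃ L : EReal, L < 0 ∧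
        Tendsto (fun t : ℝ => ((derivWithin Φ (Ici t) t : ℝ) : EReal)) atBot (nhds L)) ∧
    ((∫⁻ t in Iio (0:ℝ), ENNReal.ofReal (Real.exp (-Φ t))) < ⊤ ↔
      ∃ L : EReal, L < 0 ∧
        Tendsto (fun t : ℝ => ((derivWithin Φ (Iic t) t : ℝ) : EReal)) atBot (nhds L)) := by
  have hright : MonotoneOn (fun t : ℝ => ((derivWithin Φ (Ioi t) t : ℝ) : EReal)) (Iio 0) :=
    EReal.coe_strictMono.monotone.comp_monotoneOn
      (interior_Iio (a := (0:ℝ)) ▸ hconv.monotoneOn_rightDeriv)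
  have hleft : MonotoneOn (fun t : ℝ => ((derivWithin Φ (Iio t) t : ℝ) : EReal)) (Iio 0) :=
    EReal.coe_strictMono.monotone.comp_monotoneOn
      (interior_Iio (a := (0:ℝ)) ▸ hconv.monotoneOn_leftDeriv)
  simp_rw [← derivWithin_Ioi_eq_Ici, ← derivWithin_Iio_eq_Iic,
    hright.exists_lt_tendsto_atBot_iff, hleft.exists_lt_tendsto_atBot_iff, EReal.coe_neg']
  exact ⟨hconv.lintegral_exp_neg_Iio_lt_top_iff_exists_rightDeriv_neg,
    hconv.lintegral_exp_neg_Iio_lt_top_iff_exists_leftDeriv_neg⟩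

/-- Let `Φ : (-∞, 0) → ℝ` be convex and bounded as `t → 0⁻` (i.e. bounded
on `[-1, 0)`). Then `∫_{-∞}^0 e^{-Φ(t)} dt < ∞` if and only if `lim_{t → -∞} Φ'(t) < 0`,
where `Φ'` denotes either the right or the left derivative (the limit exists in `[-∞, ∞)`
by convexity). -/
theorem statement15 (Φ : ℝ → ℝ)
    (hconv : ConvexOn ℝ (Iio (0:ℝ)) Φ)
    (hbdd : ∃ C : ℝ, ∀ t ∈ Ico (-1 : ℝ) 0, |Φ t| ≤ C) :
    ((∫⁻ t in Iio (0:ℝ), ENNReal.ofReal (Real.exp (-Φ t))) < ⊤ ↔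
      ∃ L : EReal, L < 0 ∧
        Tendsto (fun t : ℝ => ((derivWithin Φ (Ici t) t : ℝ) : EReal)) atBot (nhds L)) ∧
    ((∫⁻ t in Iio (0:ℝ), ENNReal.ofReal (Real.exp (-Φ t))) < ⊤ ↔
      ∃ L : EReal, L < 0 ∧
        Tendsto (fun t : ℝ => ((derivWithin Φ (Iic t) t : ℝ) : EReal)) atBot (nhds L)) :=
  statement15_general Φ hconv
end
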